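/- Let T be a countable set of traces and f : T^n → T a function (Skolem function). Then there exists an injection g : T^(n+1) → ℕ, and one can define a marking of traces such that for every tuple (t₁,…,t_{n+1}) ∈ T^(n+1), the tuple satisfies t_{n+1} = f(t₁,…,t_n) if and only if there exists j ∈ ℕ at which all n+1 marked copies simultaneously carry their respective marks; moreover such a j, if it exists, is unique. -/

import Mathlib

/-!
Take for `g` any injection of the countable set `T^(n+1)` into `ℕ`. A position `j` names at most
one tuple, so if every `tᵢ` carries mark `i` at `j`, the witnessing tuples all equal `g⁻¹ j`, hence
equal `(t₁,…,t_{n+1})` itself: then `j = g (t₁,…,t_{n+1})` and the tuple satisfies `f`.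
-/

def marked {AP : Type*} {T : Set (ℕ → Set AP)} {n : ℕ}
    (f : (Fin n → T) → T) (g : (Fin (n + 1) → T) → ℕ)
    (i : Fin (n + 1)) (t : T) (j : ℕ) : Prop :=
  ∃ tup : Fin (n + 1) → T, t = tup i ∧ j = g tup ∧
    tup (Fin.last n) = f (fun i' => tup i'.castSucc)

theorem forall_marked_iff {AP : Type*} {T : Set (ℕ → Set AP)} {n : ℕ}
    {f : (Fin n → T) → T} {g : (Fin (n + 1) → T) → ℕ} (hg : Function.Injective g)
    {tup : Fin (n + 1) → T} {j : ℕ} :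
    (∀ i, marked f g i (tup i) j) ↔
      j = g tup ∧ tup (Fin.last n) = f (fun i => tup i.castSucc) := by
  constructor
  · intro h
    obtain ⟨s, -, hjs, hs⟩ := h (Fin.last n)
    have htup : tup = s := by
      funext i
      obtain ⟨s', htup_i, hjs', -⟩ := h i
      rw [htup_i, hg (hjs'.symm.trans hjs)]
    subst htup
    exact ⟨hjs, hs⟩
  · rintro ⟨hj, htup⟩ i
    exact ⟨tup, rfl, hj, htup⟩

theorem skolem_marking {AP : Type*} (T : Set (ℕ → Set AP)) (hT : T.Countable)
    (n : ℕ) (f : (Fin n → T) → T) :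
    ∃ g : (Fin (n + 1) → T) → ℕ, Function.Injective g ∧
      ∀ tup : Fin (n + 1) → T,
        ((tup (Fin.last n) = f (fun i => tup i.castSucc)) ↔
          ∃ j : ℕ, ∀ i, marked f g i (tup i) j) ∧
        ∀ j j' : ℕ, (∀ i, marked f g i (tup i) j) → (∀ i, marked f g i (tup i) j') →
          j = j' := by
  have : Countable T := hT.to_subtype
  obtain ⟨g, hg⟩ := Countable.exists_injective_nat (Fin (n + 1) → T)
  refine ⟨g, hg, fun tup => ⟨?_, fun j j' hj hj' => ?_⟩⟩
  · simp only [forall_marked_iff hg, exists_eq_left]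
  · rw [((forall_marked_iff hg).1 hj).1, ((forall_marked_iff hg).1 hj').1]
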